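/- If a shortest path graph H contains an induced cycle Cₖ for some odd k > 5, then H contains an induced 4-cycle. -/

import Mathlib

open SimpleGraph

variable {V : Type*}

/-- An `(a,b)`-geodesic in `G`: a shortest path from `a` to `b`. -/
def Geodesic (G : SimpleGraph V) (a b : V) : Type _ :=
  {p : G.Walk a b // p.IsPath ∧ p.length = G.dist a b}

/-- The set of index levels at which two geodesics differ
(position `i` in the support list is index level `i`; position `0` is `a`). -/
def diffIndices (G : SimpleGraph V) (a b : V) (U W : Geodesic G a b) : Set ℕ :=
  {i | U.1.support[i]? ≠ W.1.support[i]?}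

/-- The shortest path graph `S(G,a,b)`: vertices are the `(a,b)`-geodesics,
two geodesics being adjacent iff they differ at exactly one index level. -/
def SPG (G : SimpleGraph V) (a b : V) : SimpleGraph (Geodesic G a b) where
  Adj U W := ∃! i, i ∈ diffIndices G a b U W
  symm := by
    constructor
    rintro U W ⟨i, hi, hu⟩
    exact ⟨i, Ne.symm hi, fun j hj => hu j (Ne.symm hj)⟩
  loopless := by
    constructor
    rintro U ⟨i, hi, -⟩
    exact hi rfl

/-!
Along an induced cycle `e₀ … e_{k-1}` of `S(G,a,b)` let `iₜ` be the difference index of the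
edge `eₜeₜ₊₁`. Consecutive indices differ, since otherwise `eₜ` and `eₜ₊₂` would coincide or be
adjacent. If all consecutive indices differed by exactly one, their parity would alternate around
the cycle and `k` would be even. Hence some `eₜ₊₁` has neighbours `eₜ`, `eₜ₊₂` differing from it
at levels `i`, `j` with `|i - j| ≥ 2`, and the geodesic taking the vertex of `eₜ` at level `i` and
that of `eₜ₊₂` at level `j` closes an induced 4-cycle through `eₜ, eₜ₊₁, eₜ₊₂`.
-/

open Fin.NatCast in
theorem Fin.even_of_unit_steps {k : ℕ} [NeZero k] (f : Fin k → ℕ)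
    (hf : ∀ t, f (t + 1) = f t + 1 ∨ f t = f (t + 1) + 1) : Even k := by
  have hstep (t : Fin k) : (f (t + 1) : ZMod 2) = f t + 1 := by
    rcases hf t with h | h <;> rw [h] <;> push_cast
    · rfl
    · rw [add_assoc, CharTwo.add_self_eq_zero, add_zero]
  have hiter (n : ℕ) : (f n : ZMod 2) = f 0 + n := by
    induction n with
    | zero => simp
    | succ n ih => rw [Nat.cast_succ, hstep, ih, Nat.cast_succ, add_assoc]
  have hk := hiter k
  rw [Fin.natCast_self, left_eq_add, ZMod.natCast_eq_zero_iff] at hk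
  exact even_iff_two_dvd.2 hk

theorem Fin.ne_add_one_add_one {k : ℕ} [NeZero k] (hk : 3 ≤ k) (t : Fin k) : t ≠ t + 1 + 1 := by
  rw [add_assoc, ne_eq, left_eq_add, Fin.ext_iff]
  simp [Fin.val_add, Nat.mod_eq_of_lt (show 2 < k by omega)]

namespace SimpleGraph

section CycleGraph

variable {k : ℕ} [NeZero k]

theorem cycleGraph_adj_add_one (hk : 2 ≤ k) (t : Fin k) : (cycleGraph k).Adj t (t + 1) := by
  rw [cycleGraph_adj', add_sub_cancel_left, Fin.val_one', Nat.mod_eq_of_lt hk]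
  exact Or.inr rfl

theorem cycleGraph_not_adj_add_one_add_one (hk : 4 ≤ k) (t : Fin k) :
    ¬ (cycleGraph k).Adj t (t + 1 + 1) := by
  have hwrap : (k - 1 + (k - 1)) % k = k - 2 := by
    rw [show k - 1 + (k - 1) = k - 2 + k by omega, Nat.add_mod_right, Nat.mod_eq_of_lt (by omega)]
  rw [cycleGraph_adj', add_assoc, add_sub_cancel_left, sub_add_cancel_left]
  simp [Fin.val_add, Fin.val_neg, show k ≠ 1 by omega, Nat.mod_eq_of_lt (show 1 < k by omega),
    Nat.mod_eq_of_lt (show 2 < k by omega), hwrap]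
  omega

end CycleGraph

theorem nonempty_embedding_cycleGraph_four {α : Type*} {H : SimpleGraph α} {v₀ v₁ v₂ v₃ : α}
    (h₀₁ : H.Adj v₀ v₁) (h₁₂ : H.Adj v₁ v₂) (h₂₃ : H.Adj v₂ v₃) (h₃₀ : H.Adj v₃ v₀)
    (h₀₂ : ¬ H.Adj v₀ v₂) (h₁₃ : ¬ H.Adj v₁ v₃) (hne₀₂ : v₀ ≠ v₂) (hne₁₃ : v₁ ≠ v₃) :
    Nonempty (cycleGraph 4 ↪g H) := by
  refine ⟨⟨⟨![v₀, v₁, v₂, v₃], fun x y hxy => ?_⟩, fun {x y} => ?_⟩⟩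
  · fin_cases x <;> fin_cases y <;> simp at hxy ⊢ <;> grind [H.ne_of_adj]
  · show H.Adj (![v₀, v₁, v₂, v₃] x) (![v₀, v₁, v₂, v₃] y) ↔ _
    fin_cases x <;> fin_cases y <;>
      simp +decide [h₀₁, h₁₂, h₂₃, h₃₀, h₀₂, h₁₃, h₀₁.symm, h₁₂.symm, h₂₃.symm, h₃₀.symm,
        mt H.adj_symm h₀₂, mt H.adj_symm h₁₃]

end SimpleGraph

section Geodesics

variable {G : SimpleGraph V} {a b : V}

namespace Geodesic

theorem ext_getVert {U W : Geodesic G a b} (h : ∀ t, U.1.getVert t = W.1.getVert t) : U = W :=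
  Subtype.ext (Walk.ext_getVert h)

def DiffersOnlyAt (U W : Geodesic G a b) (i : ℕ) : Prop :=
  U.1.getVert i ≠ W.1.getVert i ∧ ∀ t ≠ i, U.1.getVert t = W.1.getVert t

theorem DiffersOnlyAt.symm {U W : Geodesic G a b} {i : ℕ} (h : U.DiffersOnlyAt W i) :
    W.DiffersOnlyAt U i :=
  ⟨h.1.symm, fun t ht => (h.2 t ht).symm⟩

def splice (U W : Geodesic G a b) (m : ℕ) (h : U.1.getVert m = W.1.getVert m) :
    Geodesic G a b :=
  let p := (U.1.take m).append ((W.1.drop m).copy h.symm rfl)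
  have hp : p.length = G.dist a b := by
    simp only [p, Walk.length_append, Walk.take_length, Walk.length_copy, Walk.drop_length,
      U.2.2, W.2.2]
    omega
  ⟨p, p.isPath_of_length_eq_dist hp, hp⟩

variable {U W : Geodesic G a b} {m t : ℕ} {h : U.1.getVert m = W.1.getVert m}

theorem getVert_splice_of_le (ht : t ≤ m) : (U.splice W m h).1.getVert t = U.1.getVert t := by
  have hU := U.2.2
  have hW := W.2.2
  simp only [splice, Walk.getVert_append', Walk.take_length, Walk.take_getVert,
    Walk.getVert_copy, Walk.drop_getVert]
  split_ifs
  · rw [min_eq_right ht]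
  · rw [U.1.getVert_of_length_le (by omega), W.1.getVert_of_length_le (by omega)]

theorem getVert_splice_of_ge (ht : m ≤ t) : (U.splice W m h).1.getVert t = W.1.getVert t := by
  have hU := U.2.2
  have hW := W.2.2
  simp only [splice, Walk.getVert_append', Walk.take_length, Walk.take_getVert,
    Walk.getVert_copy, Walk.drop_getVert]
  split_ifs
  · obtain rfl : t = m := by omega
    rw [min_self, h]
  · rcases le_total m (G.dist a b) with hm | hm
    · congr 1
      omega
    · rw [W.1.getVert_of_length_le (by omega), W.1.getVert_of_length_le (by omega)]

end Geodesic

open Geodesic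

theorem mem_diffIndices_iff {U W : Geodesic G a b} {i : ℕ} :
    i ∈ diffIndices G a b U W ↔ U.1.getVert i ≠ W.1.getVert i := by
  show U.1.support[i]? ≠ W.1.support[i]? ↔ _
  have hU := U.2.2
  have hW := W.2.2
  by_cases hi : i ≤ G.dist a b
  · rw [← U.1.getVert_eq_support_getElem? (by omega),
      ← W.1.getVert_eq_support_getElem? (by omega), ne_eq, Option.some_inj]
  · rw [U.1.getVert_of_length_le (by omega), W.1.getVert_of_length_le (by omega),
      List.getElem?_eq_none (by simp; omega), List.getElem?_eq_none (by simp; omega)]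
    simp

namespace SPG

variable {U W X : Geodesic G a b} {i j : ℕ}

theorem adj_iff : (SPG G a b).Adj U W ↔ ∃ i, U.DiffersOnlyAt W i := by
  simp only [SPG, ExistsUnique, mem_diffIndices_iff, DiffersOnlyAt]
  refine exists_congr fun i => and_congr_right fun _ => forall_congr' fun t => ?_
  rw [← not_imp_not, not_not]

theorem not_adj_of_getVert_ne (hij : i ≠ j) (hi : U.1.getVert i ≠ W.1.getVert i)
    (hj : U.1.getVert j ≠ W.1.getVert j) : ¬ (SPG G a b).Adj U W := by
  rintro ⟨k, -, hk⟩
  exact hij ((hk i (mem_diffIndices_iff.2 hi)).trans (hk j (mem_diffIndices_iff.2 hj)).symm)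

theorem eq_or_adj_of_differsOnlyAt (h₁ : U.DiffersOnlyAt W i) (h₂ : W.DiffersOnlyAt X i) :
    U = X ∨ (SPG G a b).Adj U X := by
  have hoff : ∀ t ≠ i, U.1.getVert t = X.1.getVert t :=
    fun t ht => (h₁.2 t ht).trans (h₂.2 t ht)
  by_cases hi : U.1.getVert i = X.1.getVert i
  · exact Or.inl (ext_getVert fun t => if ht : t = i then ht ▸ hi else hoff t ht)
  · exact Or.inr (adj_iff.2 ⟨i, hi, hoff⟩)

theorem nonempty_embedding_cycleGraph_four_of_differsOnlyAt (hW : U.DiffersOnlyAt W i)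
    (hX : U.DiffersOnlyAt X j) (hij : i + 2 ≤ j) : Nonempty (cycleGraph 4 ↪g SPG G a b) := by
  have hWX : W.1.getVert (i + 1) = X.1.getVert (i + 1) :=
    (hW.2 _ (by omega)).symm.trans (hX.2 _ (by omega))
  set Y := W.splice X (i + 1) hWX
  have hYi : Y.1.getVert i = W.1.getVert i := getVert_splice_of_le (by omega)
  have hYj : Y.1.getVert j = X.1.getVert j := getVert_splice_of_ge (by omega)
  have hYW : Y.DiffersOnlyAt W j := by
    refine ⟨?_, fun t ht => ?_⟩
    · rw [hYj, ← hW.2 j (by omega)]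
      exact hX.1.symm
    · rcases le_total t (i + 1) with hti | hti
      · exact getVert_splice_of_le hti
      · rw [getVert_splice_of_ge hti, ← hX.2 t ht, hW.2 t (by omega)]
  have hYX : Y.DiffersOnlyAt X i := by
    refine ⟨?_, fun t ht => ?_⟩
    · rw [hYi, ← hX.2 i (by omega)]
      exact hW.1.symm
    · rcases le_total t i with hti | hti
      · rw [getVert_splice_of_le (by omega), ← hW.2 t ht, hX.2 t (by omega)]
      · exact getVert_splice_of_ge (by omega)
  have hUYi : U.1.getVert i ≠ Y.1.getVert i := hYi ▸ hW.1
  have hUYj : U.1.getVert j ≠ Y.1.getVert j := hYj ▸ hX.1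
  have hWXi : W.1.getVert i ≠ X.1.getVert i := hYi ▸ hYX.1
  have hWXj : W.1.getVert j ≠ X.1.getVert j := hYj ▸ hYW.1.symm
  have hij' : i ≠ j := by omega
  exact nonempty_embedding_cycleGraph_four (adj_iff.2 ⟨i, hW⟩) (adj_iff.2 ⟨j, hYW.symm⟩)
    (adj_iff.2 ⟨i, hYX⟩) (adj_iff.2 ⟨j, hX.symm⟩) (not_adj_of_getVert_ne hij' hUYi hUYj)
    (not_adj_of_getVert_ne hij' hWXi hWXj) (fun h => hUYi (h ▸ rfl)) (fun h => hWXi (h ▸ rfl))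

end SPG

end Geodesics

theorem stmt_19_general {V : Type*} (G : SimpleGraph V) (a b : V)
    (k : ℕ) (hk : 5 < k) (hodd : Odd k)
    (h : Nonempty (cycleGraph k ↪g SPG G a b)) :
    Nonempty (cycleGraph 4 ↪g SPG G a b) := by
  obtain ⟨e⟩ := h
  have : NeZero k := ⟨by omega⟩
  choose i hi using fun t : Fin k =>
    SPG.adj_iff.1 (e.map_adj_iff.2 (cycleGraph_adj_add_one (by omega) t))
  have hlevel_ne (t : Fin k) : i t ≠ i (t + 1) := by
    intro heq
    rcases SPG.eq_or_adj_of_differsOnlyAt (hi t) (heq ▸ hi (t + 1)) with h | h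
    · exact Fin.ne_add_one_add_one (by omega) t (e.injective h)
    · exact cycleGraph_not_adj_add_one_add_one (by omega) t (e.map_adj_iff.1 h)
  obtain ⟨t, ht⟩ : ∃ t, ¬ (i (t + 1) = i t + 1 ∨ i t = i (t + 1) + 1) := by
    by_contra! hsteps
    exact Nat.not_even_iff_odd.2 hodd (Fin.even_of_unit_steps i hsteps)
  have hne := hlevel_ne t
  rcases (by omega : i t + 2 ≤ i (t + 1) ∨ i (t + 1) + 2 ≤ i t) with hgap | hgap
  · exact SPG.nonempty_embedding_cycleGraph_four_of_differsOnlyAt (hi t).symm (hi (t + 1)) hgap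
  · exact SPG.nonempty_embedding_cycleGraph_four_of_differsOnlyAt (hi (t + 1)) (hi t).symm hgap

/-- an induced odd cycle of length greater than 5 in a shortest path
graph forces an induced 4-cycle. -/
theorem stmt_19 {V : Type*} (G : SimpleGraph V) (a b : V) (hab : a ≠ b)
    (k : ℕ) (hk : 5 < k) (hodd : Odd k)
    (h : Nonempty (cycleGraph k ↪g SPG G a b)) :
    Nonempty (cycleGraph 4 ↪g SPG G a b) :=
  stmt_19_general G a b k hk hodd h
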